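/- arXiv:2306.04367 — 6 statements merged into one kernel-verified Lean document; each statement's English description precedes it below -/
import Mathlib

section
/- Let H be a finite simple graph and let L ⊆ V(H) be a module of H. If K is a maximum clique of H that contains at least one vertex of L, then for every maximum clique K' of the induced subgraph H[L], the set (K \ L) ∪ K' is a maximum clique of H. -/
/-- `K` is a clique of `G` entirely contained in the vertex subset `S`;
equivalently, a clique of the induced subgraph `G[S]`. -/
def IsCliqueOn {V : Type*} (G : SimpleGraph V) (S K : Finset V) : Prop :=
  K ⊆ S ∧ G.IsClique (K : Set V)

/-- `K` is a maximum clique of the induced subgraph `G[S]`. -/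
def IsMaxCliqueOn {V : Type*} (G : SimpleGraph V) (S K : Finset V) : Prop :=
  IsCliqueOn G S K ∧ ∀ K' : Finset V, IsCliqueOn G S K' → K'.card ≤ K.card

/-- The clique number `ω(G[S])` of the induced subgraph `G[S]`. -/
noncomputable def omegaOn {V : Type*} (G : SimpleGraph V) (S : Finset V) : ℕ :=
  sSup {n | ∃ K : Finset V, IsCliqueOn G S K ∧ K.card = n}

/-- `M` is a module of `G`: every vertex outside `M` is adjacent either to all
vertices of `M` or to none of them. -/
def IsModuleF {V : Type*} (G : SimpleGraph V) (M : Finset V) : Prop :=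
  ∀ z ∉ M, (∀ x ∈ M, G.Adj z x) ∨ (∀ x ∈ M, ¬ G.Adj z x)

/-- If `L` is a module of `H` and `K` is a maximum clique of `H` meeting `L`,
then for every maximum clique `K'` of `H[L]`, the set `(K \ L) ∪ K'` is a
maximum clique of `H`. -/
theorem stmt3 {V : Type*} [Fintype V] [DecidableEq V]
    (H : SimpleGraph V) (L : Finset V) (hL : IsModuleF H L)
    (K : Finset V) (hK : IsMaxCliqueOn H Finset.univ K)
    (hKL : (K ∩ L).Nonempty) :
    ∀ K' : Finset V, IsMaxCliqueOn H L K' →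
      IsMaxCliqueOn H Finset.univ ((K \ L) ∪ K') := by

  intro K' hK'
  obtain ⟨w, hw⟩ := hKL
  have hwK : w ∈ K := (Finset.mem_inter.mp hw).1
  have hwL : w ∈ L := (Finset.mem_inter.mp hw).2
  -- every z ∈ K \ L is adjacent to all of L
  have hadj : ∀ z ∈ K \ L, ∀ x ∈ L, H.Adj z x := by
    intro z hz x hx
    have hzK : z ∈ K := (Finset.mem_sdiff.mp hz).1
    have hzL : z ∉ L := (Finset.mem_sdiff.mp hz).2
    rcases hL z hzL with h | h
    · exact h x hx
    · exfalso
      have hne : z ≠ w := fun h' => hzL (h' ▸ hwL)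
      exact h w hwL (hK.1.2 (by simpa using hzK) (by simpa using hwK) hne)
  have hdisj : Disjoint (K \ L) K' := by
    refine Finset.disjoint_left.mpr fun a ha ha' => ?_
    exact (Finset.mem_sdiff.mp ha).2 (hK'.1.1 ha')
  -- clique
  have hclique : IsCliqueOn H Finset.univ ((K \ L) ∪ K') := by
    refine ⟨Finset.subset_univ _, ?_⟩
    intro a ha b hb hab
    simp only [Finset.coe_union, Set.mem_union, Finset.mem_coe] at ha hb
    rcases ha with ha | ha <;> rcases hb with hb | hb
    · exact hK.1.2 (by simpa using (Finset.mem_sdiff.mp ha).1)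
        (by simpa using (Finset.mem_sdiff.mp hb).1) hab
    · exact hadj a ha b (hK'.1.1 hb)
    · exact (hadj b hb a (hK'.1.1 ha)).symm
    · exact hK'.1.2 (by simpa using hb) (by simpa using ha) hab.symm |>.symm
  -- cardinality: K ∩ L is a clique in L, so |K ∩ L| ≤ |K'|
  have hKLclique : IsCliqueOn H L (K ∩ L) := by
    refine ⟨Finset.inter_subset_right, ?_⟩
    exact hK.1.2.subset (by intro x hx; simp only [Finset.coe_inter, Set.mem_inter_iff, Finset.mem_coe] at hx; simpa using hx.1)
  have hcard : K.card ≤ ((K \ L) ∪ K').card := by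
    rw [Finset.card_union_of_disjoint hdisj]
    have h1 : (K \ L).card + (K ∩ L).card = K.card := by
      rw [Finset.card_sdiff_add_card_inter]
    have h2 : (K ∩ L).card ≤ K'.card := hK'.2 _ hKLclique
    omega
  exact ⟨hclique, fun K'' hK'' => le_trans (hK.2 K'' hK'') hcard⟩
end

section
/- Let G be a finite simple graph. Suppose the vertex set of G is A ∪ B with L = A ∩ B, L is a module of G, and every vertex of A \ L is adjacent in G to every vertex of B \ L. If G has a maximum clique that contains at least one vertex of L, then the induced subgraph G[A] has a maximum clique containing a vertex of L, and the induced subgraph G[B] has a maximum clique containing a vertex of L. -/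
lemma aux_stmt4 {V : Type*} [Fintype V] [DecidableEq V]
    (G : SimpleGraph V) (A B L : Finset V)
    (hUnion : A ∪ B = Finset.univ) (hL : L = A ∩ B)
    (hmod : IsModuleF G L)
    (hjoin : ∀ x ∈ A \ L, ∀ y ∈ B \ L, G.Adj x y)
    (K : Finset V) (hK : IsMaxCliqueOn G Finset.univ K)
    (v : V) (hvK : v ∈ K) (hvL : v ∈ L) :
    ∃ K' : Finset V, IsMaxCliqueOn G A K' ∧ (K' ∩ L).Nonempty := by
  obtain ⟨⟨-, hKcl⟩, hKmax⟩ := hK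
  have hLA : L ⊆ A := by rw [hL]; exact Finset.inter_subset_left
  have hBLA : ∀ y ∈ K \ A, y ∈ B \ L := by
    intro y hy
    rw [Finset.mem_sdiff] at hy ⊢
    refine ⟨?_, fun hyl => hy.2 (hLA hyl)⟩
    have : y ∈ A ∪ B := hUnion ▸ Finset.mem_univ y
    rcases Finset.mem_union.1 this with h | h
    · exact absurd h hy.2
    · exact h
  refine ⟨K ∩ A, ⟨⟨Finset.inter_subset_right,
      hKcl.subset (by exact_mod_cast Finset.inter_subset_left)⟩, ?_⟩,
      ⟨v, Finset.mem_inter.2 ⟨Finset.mem_inter.2 ⟨hvK, hLA hvL⟩, hvL⟩⟩⟩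
  rintro K'' ⟨hK''A, hK''cl⟩
  have hdisj : Disjoint K'' (K \ A) := by
    apply Finset.disjoint_left.2
    intro x hx hx'
    exact (Finset.mem_sdiff.1 hx').2 (hK''A hx)
  have hadj : ∀ x ∈ K'', ∀ y ∈ K \ A, G.Adj x y := by
    intro x hx y hy
    have hyBL := hBLA y hy
    have hyL := (Finset.mem_sdiff.1 hyBL).2
    by_cases hxL : x ∈ L
    · have hyv : y ≠ v := fun h => hyL (h ▸ hvL)
      have hadjyv : G.Adj y v := hKcl (Finset.mem_sdiff.1 hy).1 hvK hyv
      rcases hmod y hyL with h | h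
      · exact (h x hxL).symm
      · exact absurd hadjyv (h v hvL)
    · exact hjoin x (Finset.mem_sdiff.2 ⟨hK''A hx, hxL⟩) y hyBL
  have hJcl : G.IsClique ((K'' ∪ (K \ A) : Finset V) : Set V) := by
    intro x hx y hy hxy
    simp only [Finset.coe_union, Set.mem_union, Finset.mem_coe] at hx hy
    rcases hx with hx | hx <;> rcases hy with hy | hy
    · exact hK''cl hx hy hxy
    · exact hadj x hx y hy
    · exact (hadj y hy x hx).symm
    · exact hKcl (Finset.mem_sdiff.1 hx).1 (Finset.mem_sdiff.1 hy).1 hxy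
  have hJle : (K'' ∪ (K \ A)).card ≤ K.card :=
    hKmax _ ⟨Finset.subset_univ _, hJcl⟩
  have h1 : (K'' ∪ (K \ A)).card = K''.card + (K \ A).card :=
    Finset.card_union_of_disjoint hdisj
  have h2 : (K ∩ A).card + (K \ A).card = K.card :=
    Finset.card_inter_add_card_sdiff K A
  omega

/-- If `V(G) = A ∪ B`, `L = A ∩ B` is a module, and all pairs between `A \ L`
and `B \ L` are adjacent, and `G` has a maximum clique meeting `L`, then both
`G[A]` and `G[B]` have maximum cliques meeting `L`. -/
theorem stmt4 {V : Type*} [Fintype V] [DecidableEq V]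
    (G : SimpleGraph V) (A B L : Finset V)
    (hUnion : A ∪ B = Finset.univ) (hL : L = A ∩ B)
    (hmod : IsModuleF G L)
    (hjoin : ∀ x ∈ A \ L, ∀ y ∈ B \ L, G.Adj x y)
    (hex : ∃ K : Finset V, IsMaxCliqueOn G Finset.univ K ∧ (K ∩ L).Nonempty) :
    (∃ K' : Finset V, IsMaxCliqueOn G A K' ∧ (K' ∩ L).Nonempty) ∧
    (∃ K'' : Finset V, IsMaxCliqueOn G B K'' ∧ (K'' ∩ L).Nonempty) := by
  obtain ⟨K, hK, w, hw⟩ := hex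
  obtain ⟨hwK, hwL⟩ := Finset.mem_inter.1 hw
  constructor
  · exact aux_stmt4 G A B L hUnion hL hmod hjoin K hK w hwK hwL
  · exact aux_stmt4 G B A L (by rw [Finset.union_comm]; exact hUnion)
      (by rw [Finset.inter_comm]; exact hL) hmod
      (fun x hx y hy => (hjoin y hy x hx).symm) K hK w hwK hwL
end

section
/- Let G be a finite simple graph. Suppose the vertex set of G is A ∪ B with L = A ∩ B, L is a module of G, and every vertex of A \ L is adjacent in G to every vertex of B \ L. Suppose K' is a maximum clique of G[A] and K'' is a maximum clique of G[B] such that K' ∩ L = K'' ∩ L and this common intersection is nonempty. If K' ∪ K'' is not a maximum clique of G, then no maximum clique of G contains a vertex of L. -/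
/-- If `K'`, `K''` are maximum cliques of `G[A]`, `G[B]` with the same nonempty
trace on `L` and `K' ∪ K''` is not a maximum clique of `G`, then no maximum
clique of `G` meets `L`. -/
theorem stmt5 {V : Type*} [Fintype V] [DecidableEq V]
    (G : SimpleGraph V) (A B L : Finset V)
    (hUnion : A ∪ B = Finset.univ) (hL : L = A ∩ B)
    (hmod : IsModuleF G L)
    (hjoin : ∀ x ∈ A \ L, ∀ y ∈ B \ L, G.Adj x y)
    (K' K'' : Finset V)
    (hK' : IsMaxCliqueOn G A K') (hK'' : IsMaxCliqueOn G B K'')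
    (heq : K' ∩ L = K'' ∩ L) (hne : (K' ∩ L).Nonempty)
    (hnotmax : ¬ IsMaxCliqueOn G Finset.univ (K' ∪ K'')) :
    ∀ K : Finset V, IsMaxCliqueOn G Finset.univ K → K ∩ L = ∅ := by
  intro K hK
  by_contra hKL
  obtain ⟨v, hv⟩ := Finset.nonempty_iff_ne_empty.mpr hKL
  obtain ⟨hvK, hvL⟩ := Finset.mem_inter.mp hv
  obtain ⟨⟨hK'sub, hK'cl⟩, hK'max⟩ := hK'
  obtain ⟨⟨hK''sub, hK''cl⟩, hK''max⟩ := hK''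
  obtain ⟨⟨_, hKcl⟩, hKmax⟩ := hK
  -- `K' ∪ K''` is a clique
  have key : ∀ a b, a ∈ K' → b ∈ K'' → a ≠ b → G.Adj a b := by
    intro a b ha hb hab
    by_cases haL : a ∈ L
    · have ha'' : a ∈ K'' := by
        have : a ∈ K'' ∩ L := heq ▸ Finset.mem_inter.mpr ⟨ha, haL⟩
        exact (Finset.mem_inter.mp this).1
      exact hK''cl (Finset.mem_coe.mpr ha'') (Finset.mem_coe.mpr hb) hab
    · by_cases hbL : b ∈ L
      · have hb' : b ∈ K' := by
          have : b ∈ K' ∩ L := heq.symm ▸ Finset.mem_inter.mpr ⟨hb, hbL⟩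
          exact (Finset.mem_inter.mp this).1
        exact hK'cl (Finset.mem_coe.mpr ha) (Finset.mem_coe.mpr hb') hab
      · exact hjoin a (Finset.mem_sdiff.mpr ⟨hK'sub ha, haL⟩)
          b (Finset.mem_sdiff.mpr ⟨hK''sub hb, hbL⟩)
  have hUcl : G.IsClique ((K' ∪ K'' : Finset V) : Set V) := by
    intro x hx y hy hxy
    simp only [Finset.coe_union, Set.mem_union, Finset.mem_coe] at hx hy
    rcases hx with hx | hx <;> rcases hy with hy | hy
    · exact hK'cl (Finset.mem_coe.mpr hx) (Finset.mem_coe.mpr hy) hxy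
    · exact key x y hx hy hxy
    · exact (key y x hy hx (Ne.symm hxy)).symm
    · exact hK''cl (Finset.mem_coe.mpr hx) (Finset.mem_coe.mpr hy) hxy
  have hUon : IsCliqueOn G Finset.univ (K' ∪ K'') := ⟨Finset.subset_univ _, hUcl⟩
  have hlt : (K' ∪ K'').card < K.card := by
    rcases lt_or_eq_of_le (hKmax _ hUon) with h | h
    · exact h
    · exact absurd ⟨hUon, fun C hC => h ▸ hKmax C hC⟩ hnotmax
  -- `K' ∩ K'' = K' ∩ L`
  have hint : K' ∩ K'' = K' ∩ L := by
    apply Finset.Subset.antisymm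
    · intro x hx
      obtain ⟨h1, h2⟩ := Finset.mem_inter.mp hx
      exact Finset.mem_inter.mpr ⟨h1, hL ▸ Finset.mem_inter.mpr ⟨hK'sub h1, hK''sub h2⟩⟩
    · intro x hx
      have hx' : x ∈ K'' ∩ L := heq ▸ hx
      exact Finset.mem_inter.mpr ⟨(Finset.mem_inter.mp hx).1, (Finset.mem_inter.mp hx').1⟩
  have hcardU : (K' ∪ K'').card + (K' ∩ L).card = K'.card + K''.card := by
    rw [← hint]; exact Finset.card_union_add_card_inter K' K''
  -- splitting K over A and B
  have hKA : (K ∩ A).card ≤ K'.card :=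
    hK'max _ ⟨Finset.inter_subset_right,
      hKcl.subset (Finset.coe_subset.mpr Finset.inter_subset_left)⟩
  have hKB : (K ∩ B).card ≤ K''.card :=
    hK''max _ ⟨Finset.inter_subset_right,
      hKcl.subset (Finset.coe_subset.mpr Finset.inter_subset_left)⟩
  have hsplit : (K ∩ A) ∪ (K ∩ B) = K := by
    rw [← Finset.inter_union_distrib_left, hUnion, Finset.inter_univ]
  have hsplit2 : (K ∩ A) ∩ (K ∩ B) = K ∩ L := by
    rw [hL]; ext x
    simp only [Finset.mem_inter]; tauto
  have hcardK : K.card + (K ∩ L).card = (K ∩ A).card + (K ∩ B).card := by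
    have := Finset.card_union_add_card_inter (K ∩ A) (K ∩ B)
    rwa [hsplit, hsplit2] at this
  have hKLlt : (K ∩ L).card < (K' ∩ L).card := by omega
  -- module property: vertices of K outside L are adjacent to all of L
  have hadjL : ∀ x ∈ K, x ∉ L → ∀ y ∈ L, G.Adj x y := by
    intro x hxK hxL y hyL
    rcases hmod x hxL with h | h
    · exact h y hyL
    · exfalso
      have hxv : x ≠ v := fun h' => hxL (h' ▸ hvL)
      exact h v hvL (hKcl (Finset.mem_coe.mpr hxK) (Finset.mem_coe.mpr hvK) hxv)
  -- the swapped clique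
  have hK2cl : G.IsClique (((K \ L) ∪ (K' ∩ L) : Finset V) : Set V) := by
    intro x hx y hy hxy
    simp only [Finset.coe_union, Set.mem_union, Finset.mem_coe, Finset.mem_sdiff,
      Finset.mem_inter] at hx hy
    rcases hx with ⟨hx1, hx2⟩ | ⟨hx1, hx2⟩ <;> rcases hy with ⟨hy1, hy2⟩ | ⟨hy1, hy2⟩
    · exact hKcl (Finset.mem_coe.mpr hx1) (Finset.mem_coe.mpr hy1) hxy
    · exact hadjL x hx1 hx2 y hy2
    · exact (hadjL y hy1 hy2 x hx2).symm
    · exact hK'cl (Finset.mem_coe.mpr hx1) (Finset.mem_coe.mpr hy1) hxy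
  have hK2le : ((K \ L) ∪ (K' ∩ L)).card ≤ K.card :=
    hKmax _ ⟨Finset.subset_univ _, hK2cl⟩
  have hdisj : Disjoint (K \ L) (K' ∩ L) := by
    rw [Finset.disjoint_left]
    intro x hx hx'
    exact (Finset.mem_sdiff.mp hx).2 (Finset.mem_inter.mp hx').2
  have hK2card : ((K \ L) ∪ (K' ∩ L)).card = (K \ L).card + (K' ∩ L).card :=
    Finset.card_union_of_disjoint hdisj
  have hsd : (K \ L).card = K.card - (K ∩ L).card := by
    rw [← Finset.sdiff_inter_self_left, Finset.card_sdiff_of_subset Finset.inter_subset_left]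
  have hKLle : (K ∩ L).card ≤ K.card := Finset.card_le_card Finset.inter_subset_left
  omega
end

section
/- Let G be a finite simple graph. Suppose the vertex set of G is A ∪ B with L = A ∩ B, L is a module of G, and every vertex of A \ L is adjacent in G to every vertex of B \ L. Then ω(G) = max{ ω(G[A]) + ω(G[B]) − ω(G[L]), ω(G[A \ L]) + ω(G[B \ L]) }. -/
private lemma bddOmega {V : Type*} (G : SimpleGraph V) (S : Finset V) :
    BddAbove {n | ∃ K : Finset V, IsCliqueOn G S K ∧ K.card = n} := by
  refine ⟨S.card, fun n hn => ?_⟩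
  obtain ⟨K, hK, rfl⟩ := hn
  exact Finset.card_le_card hK.1

private lemma le_omegaOn {V : Type*} {G : SimpleGraph V} {S K : Finset V}
    (h : IsCliqueOn G S K) : K.card ≤ omegaOn G S :=
  le_csSup (bddOmega G S) ⟨K, h, rfl⟩

private lemma omegaOn_spec {V : Type*} (G : SimpleGraph V) (S : Finset V) :
    ∃ K : Finset V, IsCliqueOn G S K ∧ K.card = omegaOn G S := by
  have hne : {n | ∃ K : Finset V, IsCliqueOn G S K ∧ K.card = n}.Nonempty :=
    ⟨0, ∅, ⟨by simp, by simp⟩, by simp⟩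
  exact Nat.sSup_mem hne (bddOmega G S)

private lemma omegaOn_mono {V : Type*} (G : SimpleGraph V) {S T : Finset V} (h : S ⊆ T) :
    omegaOn G S ≤ omegaOn G T := by
  obtain ⟨K, ⟨h1, h2⟩, hc⟩ := omegaOn_spec G S
  exact hc ▸ le_omegaOn ⟨h1.trans h, h2⟩

/-- Dichotomy for one side: either `ω(S)` is witnessed (up to `ω(L)`) by a clique
in `S \ L` all of whose vertices see all of `L`, or `ω(S) ≤ ω(S \ L)`. -/
private lemma side_dichotomy {V : Type*} [DecidableEq V] {G : SimpleGraph V} {L : Finset V}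
    (hmod : IsModuleF G L) (S : Finset V) :
    (∃ C : Finset V, C ⊆ S \ L ∧ G.IsClique (C : Set V) ∧
      (∀ x ∈ C, ∀ y ∈ L, G.Adj x y) ∧ omegaOn G S ≤ C.card + omegaOn G L) ∨
    omegaOn G S ≤ omegaOn G (S \ L) := by
  obtain ⟨K, ⟨hKS, hKclq⟩, hKcard⟩ := omegaOn_spec G S
  by_cases hne : (K ∩ L).Nonempty
  · obtain ⟨z0, hz0⟩ := hne
    rw [Finset.mem_inter] at hz0
    left
    refine ⟨K \ L, Finset.sdiff_subset_sdiff hKS le_rfl,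
      hKclq.subset (by rw [Finset.coe_sdiff]; exact Set.diff_subset), ?_, ?_⟩
    · intro x hx y hy
      rw [Finset.mem_sdiff] at hx
      rcases hmod x hx.2 with h | h
      · exact h y hy
      · refine absurd (hKclq (Finset.mem_coe.2 hx.1) (Finset.mem_coe.2 hz0.1)
          (fun e => hx.2 (e ▸ hz0.2))) (h z0 hz0.2)
    · have h1 : (K ∩ L).card ≤ omegaOn G L :=
        le_omegaOn ⟨Finset.inter_subset_right,
          hKclq.subset (Finset.coe_subset.2 Finset.inter_subset_left)⟩
      have h2 : (K \ L).card + (K ∩ L).card = K.card := Finset.card_sdiff_add_card_inter K L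
      omega
  · right
    have hsub : K ⊆ S \ L := fun x hx => Finset.mem_sdiff.2
      ⟨hKS hx, fun hxL => hne ⟨x, Finset.mem_inter.2 ⟨hx, hxL⟩⟩⟩
    exact hKcard ▸ le_omegaOn ⟨hsub, hKclq⟩

/-- With `V(G) = A ∪ B`, `L = A ∩ B` a module, and all pairs between `A \ L`
and `B \ L` adjacent:
`ω(G) = max (ω(G[A]) + ω(G[B]) - ω(G[L])) (ω(G[A \ L]) + ω(G[B \ L]))`. -/
theorem stmt6 {V : Type*} [Fintype V] [DecidableEq V]
    (G : SimpleGraph V) (A B L : Finset V)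
    (hUnion : A ∪ B = Finset.univ) (hL : L = A ∩ B)
    (hmod : IsModuleF G L)
    (hjoin : ∀ x ∈ A \ L, ∀ y ∈ B \ L, G.Adj x y) :
    omegaOn G Finset.univ =
      max (omegaOn G A + omegaOn G B - omegaOn G L)
          (omegaOn G (A \ L) + omegaOn G (B \ L)) := by
  have hLA : L ⊆ A := hL ▸ Finset.inter_subset_left
  have hLB : L ⊆ B := hL ▸ Finset.inter_subset_right
  have hdisj : Disjoint (A \ L) (B \ L) := by
    rw [Finset.disjoint_left]
    intro x h1 h2
    rw [Finset.mem_sdiff] at h1 h2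
    exact h1.2 (hL ▸ Finset.mem_inter.2 ⟨h1.1, h2.1⟩)
  obtain ⟨ML, ⟨hMLsub, hMLclq⟩, hMLcard⟩ := omegaOn_spec G L
  -- second term is ≤ ω(G)
  obtain ⟨K1, ⟨h1s, h1c⟩, h1card⟩ := omegaOn_spec G (A \ L)
  obtain ⟨K2, ⟨h2s, h2c⟩, h2card⟩ := omegaOn_spec G (B \ L)
  have hK12disj : Disjoint K1 K2 :=
    Finset.disjoint_of_subset_left h1s (Finset.disjoint_of_subset_right h2s hdisj)
  have hK12 : IsCliqueOn G Finset.univ (K1 ∪ K2) := by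
    refine ⟨Finset.subset_univ _, ?_⟩
    intro x hx y hy hxy
    rw [Finset.coe_union, Set.mem_union] at hx hy
    rcases hx with hx | hx <;> rcases hy with hy | hy
    · exact h1c hx hy hxy
    · exact hjoin x (h1s hx) y (h2s hy)
    · exact (hjoin y (h1s hy) x (h2s hx)).symm
    · exact h2c hx hy hxy
  have hsecond : omegaOn G (A \ L) + omegaOn G (B \ L) ≤ omegaOn G Finset.univ := by
    have := le_omegaOn hK12
    rwa [Finset.card_union_of_disjoint hK12disj, h1card, h2card] at this
  -- first term is ≤ ω(G) (possibly via the second term)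
  have hCA1 : ∀ C : Finset V, C ⊆ A \ L → G.IsClique (C : Set V) → C.card ≤ omegaOn G (A \ L) :=
    fun C hs hc => le_omegaOn ⟨hs, hc⟩
  have hCB1 : ∀ C : Finset V, C ⊆ B \ L → G.IsClique (C : Set V) → C.card ≤ omegaOn G (B \ L) :=
    fun C hs hc => le_omegaOn ⟨hs, hc⟩
  have hfirst : omegaOn G A + omegaOn G B - omegaOn G L ≤ omegaOn G Finset.univ := by
    rcases side_dichotomy hmod A with ⟨CA, hCAs, hCAc, hCAadj, hCAcard⟩ | hA
    · rcases side_dichotomy hmod B with ⟨CB, hCBs, hCBc, hCBadj, hCBcard⟩ | hB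
      · -- build the clique CA ∪ CB ∪ ML
        have hclq : IsCliqueOn G Finset.univ (CA ∪ CB ∪ ML) := by
          refine ⟨Finset.subset_univ _, ?_⟩
          intro x hx y hy hxy
          rw [Finset.coe_union, Finset.coe_union, Set.mem_union, Set.mem_union] at hx hy
          rcases hx with (hx | hx) | hx <;> rcases hy with (hy | hy) | hy
          · exact hCAc hx hy hxy
          · exact hjoin x (hCAs hx) y (hCBs hy)
          · exact hCAadj x hx y (hMLsub hy)
          · exact (hjoin y (hCAs hy) x (hCBs hx)).symm
          · exact hCBc hx hy hxy
          · exact hCBadj x hx y (hMLsub hy)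
          · exact (hCAadj y hy x (hMLsub hx)).symm
          · exact (hCBadj y hy x (hMLsub hx)).symm
          · exact hMLclq hx hy hxy
        have hd1 : Disjoint CA CB :=
          Finset.disjoint_of_subset_left hCAs (Finset.disjoint_of_subset_right hCBs hdisj)
        have hd2 : Disjoint (CA ∪ CB) ML := by
          rw [Finset.disjoint_union_left]
          constructor
          · exact Finset.disjoint_of_subset_left hCAs (Finset.disjoint_of_subset_right hMLsub
              (Finset.sdiff_disjoint))
          · exact Finset.disjoint_of_subset_left hCBs (Finset.disjoint_of_subset_right hMLsub
              (Finset.sdiff_disjoint))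
        have hcard := le_omegaOn hclq
        rw [Finset.card_union_of_disjoint hd2, Finset.card_union_of_disjoint hd1, hMLcard] at hcard
        omega
      · have h1 := hCA1 CA hCAs hCAc
        omega
    · rcases side_dichotomy hmod B with ⟨CB, hCBs, hCBc, hCBadj, hCBcard⟩ | hB
      · have h1 := hCB1 CB hCBs hCBc
        omega
      · omega
  -- upper bound
  have hupper : omegaOn G Finset.univ ≤
      max (omegaOn G A + omegaOn G B - omegaOn G L)
          (omegaOn G (A \ L) + omegaOn G (B \ L)) := by
    obtain ⟨K, ⟨hKu, hKclq⟩, hKcard⟩ := omegaOn_spec G Finset.univ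
    by_cases hKL : (K ∩ L).Nonempty
    · -- K meets L
      obtain ⟨z0, hz0⟩ := hKL
      rw [Finset.mem_inter] at hz0
      have hadj : ∀ x ∈ K, x ∉ L → ∀ y ∈ L, G.Adj x y := by
        intro x hxK hxL y hy
        rcases hmod x hxL with h | h
        · exact h y hy
        · exact absurd (hKclq (Finset.mem_coe.2 hxK) (Finset.mem_coe.2 hz0.1)
            (fun e => hxL (e ▸ hz0.2))) (h z0 hz0.2)
      -- clique (K ∩ A) \ L ∪ ML inside A
      have key : ∀ S : Finset V, L ⊆ S →
          ((K ∩ S) \ L).card + omegaOn G L ≤ omegaOn G S := by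
        intro S hLS
        have hclq : IsCliqueOn G S (((K ∩ S) \ L) ∪ ML) := by
          constructor
          · intro x hx
            rw [Finset.mem_union] at hx
            rcases hx with hx | hx
            · exact (Finset.mem_inter.1 (Finset.mem_sdiff.1 hx).1).2
            · exact hLS (hMLsub hx)
          · intro x hx y hy hxy
            rw [Finset.coe_union, Set.mem_union] at hx hy
            rcases hx with hx | hx <;> rcases hy with hy | hy
            · exact hKclq (Finset.mem_coe.2 (Finset.mem_inter.1 (Finset.mem_sdiff.1 hx).1).1)
                (Finset.mem_coe.2 (Finset.mem_inter.1 (Finset.mem_sdiff.1 hy).1).1) hxy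
            · exact hadj x (Finset.mem_inter.1 (Finset.mem_sdiff.1 hx).1).1
                (Finset.mem_sdiff.1 hx).2 y (hMLsub hy)
            · exact (hadj y (Finset.mem_inter.1 (Finset.mem_sdiff.1 hy).1).1
                (Finset.mem_sdiff.1 hy).2 x (hMLsub hx)).symm
            · exact hMLclq hx hy hxy
        have hd : Disjoint ((K ∩ S) \ L) ML :=
          Finset.disjoint_of_subset_right hMLsub Finset.sdiff_disjoint
        have := le_omegaOn hclq
        rwa [Finset.card_union_of_disjoint hd, hMLcard] at this
      have hAkey := key A hLA
      have hBkey := key B hLB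
      -- cardinality bookkeeping
      have hsplit : (K ∩ A) ∪ (K ∩ B) = K := by
        rw [← Finset.inter_union_distrib_left, hUnion, Finset.inter_univ]
      have hcu : ((K ∩ A) ∪ (K ∩ B)).card + ((K ∩ A) ∩ (K ∩ B)).card
          = (K ∩ A).card + (K ∩ B).card := Finset.card_union_add_card_inter _ _
      have hKLeq : (K ∩ A) ∩ (K ∩ B) = K ∩ L := by
        rw [hL]
        ext x
        simp only [Finset.mem_inter]
        tauto
      rw [hsplit, hKLeq] at hcu
      have hKA : ((K ∩ A) \ L).card + ((K ∩ A) ∩ L).card = (K ∩ A).card :=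
        Finset.card_sdiff_add_card_inter _ _
      have hKB : ((K ∩ B) \ L).card + ((K ∩ B) ∩ L).card = (K ∩ B).card :=
        Finset.card_sdiff_add_card_inter _ _
      have hKAL : (K ∩ A) ∩ L = K ∩ L := by
        rw [Finset.inter_assoc, Finset.inter_eq_right.2 hLA]
      have hKBL : (K ∩ B) ∩ L = K ∩ L := by
        rw [Finset.inter_assoc, Finset.inter_eq_right.2 hLB]
      rw [hKAL] at hKA
      rw [hKBL] at hKB
      have hKLle : (K ∩ L).card ≤ omegaOn G L :=
        le_omegaOn ⟨Finset.inter_subset_right,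
          hKclq.subset (Finset.coe_subset.2 Finset.inter_subset_left)⟩
      have : omegaOn G Finset.univ ≤ omegaOn G A + omegaOn G B - omegaOn G L := by omega
      exact le_trans this (le_max_left _ _)
    · -- K misses L
      have hsub : K ⊆ (A \ L) ∪ (B \ L) := by
        intro x hx
        have hxL : x ∉ L := fun h => hKL ⟨x, Finset.mem_inter.2 ⟨hx, h⟩⟩
        have hxAB : x ∈ A ∪ B := hUnion ▸ Finset.mem_univ x
        rw [Finset.mem_union] at hxAB ⊢
        rcases hxAB with h | h
        · exact Or.inl (Finset.mem_sdiff.2 ⟨h, hxL⟩)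
        · exact Or.inr (Finset.mem_sdiff.2 ⟨h, hxL⟩)
      have hKA : (K ∩ (A \ L)).card ≤ omegaOn G (A \ L) :=
        le_omegaOn ⟨Finset.inter_subset_right,
          hKclq.subset (Finset.coe_subset.2 Finset.inter_subset_left)⟩
      have hKB : (K ∩ (B \ L)).card ≤ omegaOn G (B \ L) :=
        le_omegaOn ⟨Finset.inter_subset_right,
          hKclq.subset (Finset.coe_subset.2 Finset.inter_subset_left)⟩
      have hKeq : (K ∩ (A \ L)) ∪ (K ∩ (B \ L)) = K := by
        rw [← Finset.inter_union_distrib_left, Finset.inter_eq_left.2 hsub]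
      have hle : K.card ≤ (K ∩ (A \ L)).card + (K ∩ (B \ L)).card := by
        calc K.card = ((K ∩ (A \ L)) ∪ (K ∩ (B \ L))).card := by rw [hKeq]
        _ ≤ _ := Finset.card_union_le _ _
      have : omegaOn G Finset.univ ≤ omegaOn G (A \ L) + omegaOn G (B \ L) := by omega
      exact le_trans this (le_max_right _ _)
  exact le_antisymm hupper (max_le hfirst hsecond)
end

section
/- Let G be a finite simple graph. Suppose the vertex set of G is A ∪ B with L = A ∩ B, L is a module of G, and every vertex of A \ L is adjacent in G to every vertex of B \ L. Put α = ω(G[A]) + ω(G[B]) − ω(G[L]) and β = ω(G[A \ L]) + ω(G[B \ L]). If α > β, then every maximum clique of G contains a vertex of L, and for every maximum clique K' of G[A] and every maximum clique K'' of G[B] satisfying K' ∩ L = K'' ∩ L ≠ ∅, the set K' ∪ K'' is a maximum clique of G. -/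
section Aux

variable {V : Type*} [Fintype V] [DecidableEq V] {G : SimpleGraph V}

lemma myBddAux (G : SimpleGraph V) (S : Finset V) :
    BddAbove {n | ∃ K : Finset V, IsCliqueOn G S K ∧ K.card = n} :=
  ⟨Fintype.card V, fun n hn => by obtain ⟨K, _, hc⟩ := hn; exact hc ▸ K.card_le_univ⟩

lemma cliqueOn_card_le {S K : Finset V} (h : IsCliqueOn G S K) :
    K.card ≤ omegaOn G S :=
  le_csSup (myBddAux G S) ⟨K, h, rfl⟩

lemma exists_maxCliqueOn (G : SimpleGraph V) (S : Finset V) :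
    ∃ K : Finset V, IsCliqueOn G S K ∧ K.card = omegaOn G S := by
  have hne : {n | ∃ K : Finset V, IsCliqueOn G S K ∧ K.card = n}.Nonempty :=
    ⟨0, ∅, ⟨Finset.empty_subset _, by simp⟩, Finset.card_empty⟩
  obtain ⟨K, hK, hc⟩ := Nat.sSup_mem hne (myBddAux G S)
  exact ⟨K, hK, hc⟩

lemma maxCliqueOn_card {S K : Finset V} (h : IsMaxCliqueOn G S K) :
    K.card = omegaOn G S := by
  obtain ⟨Km, hKm, hc⟩ := exists_maxCliqueOn G S
  exact le_antisymm (cliqueOn_card_le h.1) (hc ▸ h.2 Km hKm)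

lemma isMaxCliqueOn_of_card {S K : Finset V} (h : IsCliqueOn G S K)
    (hc : K.card = omegaOn G S) : IsMaxCliqueOn G S K :=
  ⟨h, fun K' hK' => hc ▸ cliqueOn_card_le hK'⟩

/-- If a clique contains a vertex of the module `L`, then every vertex of the
clique outside `L` is adjacent to all of `L`. -/
lemma mod_adj {L K : Finset V} (hmod : IsModuleF G L)
    (hK : G.IsClique (K : Set V)) {v : V} (hv : v ∈ K) (hvL : v ∈ L)
    {z : V} (hz : z ∈ K) (hzL : z ∉ L) : ∀ x ∈ L, G.Adj z x := by
  rcases hmod z hzL with h | h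
  · exact h
  · exact absurd (hK (Finset.mem_coe.mpr hz) (Finset.mem_coe.mpr hv)
      (fun he => hzL (he ▸ hvL))) (h v hvL)

/-- Extension bound: a set `T` of vertices of a clique `K` (which meets `L`)
avoiding `L`, together with any clique `M` in `L`, forms a clique; hence the
bound on `omegaOn G S`. -/
lemma ext_bound {L K T M S : Finset V} (hmod : IsModuleF G L)
    (hKc : G.IsClique (K : Set V)) {v : V} (hv : v ∈ K) (hvL : v ∈ L)
    (hT : T ⊆ K) (hTL : ∀ x ∈ T, x ∉ L)
    (hM : IsCliqueOn G L M) (hTS : T ⊆ S) (hLS : L ⊆ S) :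
    T.card + M.card ≤ omegaOn G S := by
  have hdisj : Disjoint T M :=
    Finset.disjoint_left.mpr fun x hxT hxM => hTL x hxT (hM.1 hxM)
  have hclique : IsCliqueOn G S (T ∪ M) := by
    refine ⟨Finset.union_subset hTS (hM.1.trans hLS), ?_⟩
    intro x hx y hy hxy
    rw [Finset.coe_union, Set.mem_union] at hx hy
    rcases hx with hx | hx <;> rcases hy with hy | hy
    · exact hKc (Finset.mem_coe.mpr (hT hx)) (Finset.mem_coe.mpr (hT hy)) hxy
    · exact mod_adj hmod hKc hv hvL (hT hx) (hTL x hx) y (hM.1 hy)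
    · exact (mod_adj hmod hKc hv hvL (hT hy) (hTL y hy) x (hM.1 hx)).symm
    · exact hM.2 hx hy hxy
  calc T.card + M.card = (T ∪ M).card := (Finset.card_union_of_disjoint hdisj).symm
    _ ≤ omegaOn G S := cliqueOn_card_le hclique

/-- A maximum clique of `G[S]` meeting the module `L ⊆ S` meets it in a
maximum clique of `G[L]`. -/
lemma inter_L_card {L S K : Finset V} (hmod : IsModuleF G L) (hLS : L ⊆ S)
    (hK : IsMaxCliqueOn G S K) (hne : (K ∩ L).Nonempty) :
    (K ∩ L).card = omegaOn G L := by
  obtain ⟨v, hv⟩ := hne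
  rw [Finset.mem_inter] at hv
  obtain ⟨M, hM, hMc⟩ := exists_maxCliqueOn G L
  have h1 : (K ∩ L).card ≤ omegaOn G L :=
    cliqueOn_card_le ⟨Finset.inter_subset_right,
      hK.1.2.subset (Finset.coe_subset.mpr Finset.inter_subset_left)⟩
  have h2 : (K \ L).card + M.card ≤ omegaOn G S :=
    ext_bound hmod hK.1.2 hv.1 hv.2 Finset.sdiff_subset
      (fun x hx => (Finset.mem_sdiff.mp hx).2) hM
      (Finset.sdiff_subset.trans hK.1.1) hLS
  have h3 := Finset.card_inter_add_card_sdiff K L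
  have h4 : K.card = omegaOn G S := maxCliqueOn_card hK
  omega

lemma split_bound {L S K : Finset V} (hK : IsCliqueOn G S K) :
    K.card ≤ omegaOn G L + omegaOn G (S \ L) := by
  have h1 : (K ∩ L).card ≤ omegaOn G L :=
    cliqueOn_card_le ⟨Finset.inter_subset_right,
      hK.2.subset (Finset.coe_subset.mpr Finset.inter_subset_left)⟩
  have h2 : (K \ L).card ≤ omegaOn G (S \ L) :=
    cliqueOn_card_le ⟨fun x hx => Finset.mem_sdiff.mpr
      ⟨hK.1 (Finset.mem_sdiff.mp hx).1, (Finset.mem_sdiff.mp hx).2⟩,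
      hK.2.subset (Finset.coe_subset.mpr Finset.sdiff_subset)⟩
  have h3 := Finset.card_inter_add_card_sdiff K L
  omega

end Aux

/-- Same setting; if `α > β`, then every maximum clique of `G` meets `L`, and
for all maximum cliques `K'` of `G[A]` and `K''` of `G[B]` with
`K' ∩ L = K'' ∩ L ≠ ∅`, the set `K' ∪ K''` is a maximum clique of `G`. -/
theorem stmt8 {V : Type*} [Fintype V] [DecidableEq V]
    (G : SimpleGraph V) (A B L : Finset V)
    (hUnion : A ∪ B = Finset.univ) (hL : L = A ∩ B)
    (hmod : IsModuleF G L)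
    (hjoin : ∀ x ∈ A \ L, ∀ y ∈ B \ L, G.Adj x y)
    (hab : omegaOn G A + omegaOn G B - omegaOn G L >
           omegaOn G (A \ L) + omegaOn G (B \ L)) :
    (∀ K : Finset V, IsMaxCliqueOn G Finset.univ K → (K ∩ L).Nonempty) ∧
    ∀ K' K'' : Finset V, IsMaxCliqueOn G A K' → IsMaxCliqueOn G B K'' →
      K' ∩ L = K'' ∩ L → (K' ∩ L).Nonempty →
      IsMaxCliqueOn G Finset.univ (K' ∪ K'') := by
  have hLA : L ⊆ A := hL ▸ Finset.inter_subset_left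
  have hLB : L ⊆ B := hL ▸ Finset.inter_subset_right
  -- a clique of G avoiding L has size at most β
  have hβbound : ∀ K : Finset V, IsCliqueOn G Finset.univ K → K ∩ L = ∅ →
      K.card ≤ omegaOn G (A \ L) + omegaOn G (B \ L) := by
    intro K hK hKL
    have hKA : IsCliqueOn G (A \ L) (K ∩ A) := by
      refine ⟨fun x hx => ?_, hK.2.subset (Finset.coe_subset.mpr Finset.inter_subset_left)⟩
      rw [Finset.mem_inter] at hx
      refine Finset.mem_sdiff.mpr ⟨hx.2, fun hxL => ?_⟩
      exact Finset.notMem_empty x (hKL ▸ Finset.mem_inter.mpr ⟨hx.1, hxL⟩)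
    have hKB : IsCliqueOn G (B \ L) (K \ A) := by
      refine ⟨fun x hx => ?_, hK.2.subset (Finset.coe_subset.mpr Finset.sdiff_subset)⟩
      rw [Finset.mem_sdiff] at hx
      have hx' : x ∈ A ∪ B := hUnion ▸ Finset.mem_univ x
      refine Finset.mem_sdiff.mpr ⟨(Finset.mem_union.mp hx').resolve_left hx.2, fun hxL => ?_⟩
      exact Finset.notMem_empty x (hKL ▸ Finset.mem_inter.mpr ⟨hx.1, hxL⟩)
    have h1 := cliqueOn_card_le hKA
    have h2 := cliqueOn_card_le hKB
    have e := Finset.card_inter_add_card_sdiff K A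
    omega
  -- every clique of G has size at most α
  have hub : ∀ K : Finset V, IsCliqueOn G Finset.univ K →
      K.card ≤ omegaOn G A + omegaOn G B - omegaOn G L := by
    intro K hK
    by_cases hne : (K ∩ L).Nonempty
    · obtain ⟨v, hv⟩ := hne
      rw [Finset.mem_inter] at hv
      obtain ⟨M, hM, hMc⟩ := exists_maxCliqueOn G L
      have hTA : ((K \ L) ∩ A).card + M.card ≤ omegaOn G A :=
        ext_bound hmod hK.2 hv.1 hv.2
          (Finset.inter_subset_left.trans Finset.sdiff_subset)
          (fun x hx => (Finset.mem_sdiff.mp (Finset.mem_inter.mp hx).1).2)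
          hM Finset.inter_subset_right hLA
      have hTB : ((K \ L) \ A).card + M.card ≤ omegaOn G B := by
        refine ext_bound hmod hK.2 hv.1 hv.2
          (Finset.sdiff_subset.trans Finset.sdiff_subset)
          (fun x hx => (Finset.mem_sdiff.mp (Finset.mem_sdiff.mp hx).1).2)
          hM ?_ hLB
        intro x hx
        rw [Finset.mem_sdiff] at hx
        have hx' : x ∈ A ∪ B := hUnion ▸ Finset.mem_univ x
        exact (Finset.mem_union.mp hx').resolve_left hx.2
      have hML : (K ∩ L).card ≤ omegaOn G L :=
        cliqueOn_card_le ⟨Finset.inter_subset_right,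
          hK.2.subset (Finset.coe_subset.mpr Finset.inter_subset_left)⟩
      have e1 := Finset.card_inter_add_card_sdiff K L
      have e2 := Finset.card_inter_add_card_sdiff (K \ L) A
      omega
    · rw [Finset.not_nonempty_iff_eq_empty] at hne
      have := hβbound K hK hne
      omega
  -- core: the union of matching maximum cliques is a clique of size α
  have core : ∀ K' K'' : Finset V, IsMaxCliqueOn G A K' → IsMaxCliqueOn G B K'' →
      K' ∩ L = K'' ∩ L → (K' ∩ L).Nonempty →
      IsCliqueOn G Finset.univ (K' ∪ K'') ∧
      (K' ∪ K'').card = omegaOn G A + omegaOn G B - omegaOn G L := by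
    intro K' K'' hK' hK'' heq hne
    have hclique : IsCliqueOn G Finset.univ (K' ∪ K'') := by
      refine ⟨Finset.subset_univ _, ?_⟩
      have key : ∀ x ∈ K', ∀ y ∈ K'', x ≠ y → G.Adj x y := by
        intro x hx y hy hxy
        by_cases hxL : x ∈ L
        · have hxK'' : x ∈ K'' :=
            (Finset.mem_inter.mp (heq ▸ Finset.mem_inter.mpr ⟨hx, hxL⟩)).1
          exact hK''.1.2 (Finset.mem_coe.mpr hxK'') (Finset.mem_coe.mpr hy) hxy
        · by_cases hyL : y ∈ L
          · have hyK' : y ∈ K' :=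
              (Finset.mem_inter.mp (heq.symm ▸ Finset.mem_inter.mpr ⟨hy, hyL⟩)).1
            exact hK'.1.2 (Finset.mem_coe.mpr hx) (Finset.mem_coe.mpr hyK') hxy
          · exact hjoin x (Finset.mem_sdiff.mpr ⟨hK'.1.1 hx, hxL⟩) y
              (Finset.mem_sdiff.mpr ⟨hK''.1.1 hy, hyL⟩)
      intro x hx y hy hxy
      rw [Finset.coe_union, Set.mem_union] at hx hy
      rcases hx with hx | hx <;> rcases hy with hy | hy
      · exact hK'.1.2 hx hy hxy
      · exact key x hx y hy hxy
      · exact (key y hy x hx (Ne.symm hxy)).symm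
      · exact hK''.1.2 hx hy hxy
    have hinter : K' ∩ K'' = K' ∩ L := by
      apply Finset.Subset.antisymm
      · intro x hx
        rw [Finset.mem_inter] at hx ⊢
        exact ⟨hx.1, hL ▸ Finset.mem_inter.mpr ⟨hK'.1.1 hx.1, hK''.1.1 hx.2⟩⟩
      · intro x hx
        have hx' := Finset.mem_inter.mp hx
        exact Finset.mem_inter.mpr
          ⟨hx'.1, (Finset.mem_inter.mp (heq ▸ hx)).1⟩
    have hLcard : (K' ∩ L).card = omegaOn G L := inter_L_card hmod hLA hK' hne
    have e := Finset.card_union_add_card_inter K' K''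
    have c1 := maxCliqueOn_card hK'
    have c2 := maxCliqueOn_card hK''
    have hle : (K' ∩ L).card ≤ K'.card := Finset.card_le_card Finset.inter_subset_left
    rw [hinter, hLcard] at e
    exact ⟨hclique, by omega⟩
  constructor
  · -- every maximum clique of G meets L
    intro K hK
    by_contra hempty
    rw [Finset.not_nonempty_iff_eq_empty] at hempty
    obtain ⟨K₀, hK₀c, hK₀card⟩ := exists_maxCliqueOn G A
    obtain ⟨K₁, hK₁c, hK₁card⟩ := exists_maxCliqueOn G B
    have hK₀ : IsMaxCliqueOn G A K₀ := isMaxCliqueOn_of_card hK₀c hK₀card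
    have hK₁ : IsMaxCliqueOn G B K₁ := isMaxCliqueOn_of_card hK₁c hK₁card
    have hβB : omegaOn G B ≤ omegaOn G L + omegaOn G (B \ L) := by
      have := split_bound (L := L) hK₁c; omega
    have hβA : omegaOn G A ≤ omegaOn G L + omegaOn G (A \ L) := by
      have := split_bound (L := L) hK₀c; omega
    have hne₀ : (K₀ ∩ L).Nonempty := by
      by_contra h
      rw [Finset.not_nonempty_iff_eq_empty] at h
      have hsub : IsCliqueOn G (A \ L) K₀ := by
        refine ⟨fun x hx => Finset.mem_sdiff.mpr ⟨hK₀c.1 hx, fun hxL => ?_⟩, hK₀c.2⟩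
        exact Finset.notMem_empty x (h ▸ Finset.mem_inter.mpr ⟨hx, hxL⟩)
      have := cliqueOn_card_le hsub
      omega
    have hne₁ : (K₁ ∩ L).Nonempty := by
      by_contra h
      rw [Finset.not_nonempty_iff_eq_empty] at h
      have hsub : IsCliqueOn G (B \ L) K₁ := by
        refine ⟨fun x hx => Finset.mem_sdiff.mpr ⟨hK₁c.1 hx, fun hxL => ?_⟩, hK₁c.2⟩
        exact Finset.notMem_empty x (h ▸ Finset.mem_inter.mpr ⟨hx, hxL⟩)
      have := cliqueOn_card_le hsub
      omega
    obtain ⟨v₁, hv₁⟩ := hne₁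
    rw [Finset.mem_inter] at hv₁
    set K₁' := (K₁ \ L) ∪ (K₀ ∩ L) with hK₁'def
    have hK₁'clique : IsCliqueOn G B K₁' := by
      refine ⟨Finset.union_subset (Finset.sdiff_subset.trans hK₁c.1)
        (Finset.inter_subset_right.trans hLB), ?_⟩
      intro x hx y hy hxy
      rw [hK₁'def, Finset.coe_union, Set.mem_union] at hx hy
      rcases hx with hx | hx <;> rcases hy with hy | hy
      · exact hK₁c.2 (Finset.mem_coe.mpr (Finset.sdiff_subset hx))
          (Finset.mem_coe.mpr (Finset.sdiff_subset hy)) hxy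
      · exact mod_adj hmod hK₁c.2 hv₁.1 hv₁.2 (Finset.mem_sdiff.mp hx).1
          (Finset.mem_sdiff.mp hx).2 y (Finset.mem_inter.mp hy).2
      · exact (mod_adj hmod hK₁c.2 hv₁.1 hv₁.2 (Finset.mem_sdiff.mp hy).1
          (Finset.mem_sdiff.mp hy).2 x (Finset.mem_inter.mp hx).2).symm
      · exact hK₀c.2 (Finset.mem_coe.mpr (Finset.inter_subset_left hx))
          (Finset.mem_coe.mpr (Finset.inter_subset_left hy)) hxy
    have hd : Disjoint (K₁ \ L) (K₀ ∩ L) := Finset.disjoint_left.mpr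
      fun x hx hx' => (Finset.mem_sdiff.mp hx).2 (Finset.mem_inter.mp hx').2
    have hc0 : (K₀ ∩ L).card = omegaOn G L := inter_L_card hmod hLA hK₀ hne₀
    have hc1 : (K₁ ∩ L).card = omegaOn G L :=
      inter_L_card hmod hLB hK₁ ⟨v₁, Finset.mem_inter.mpr hv₁⟩
    have e1 := Finset.card_inter_add_card_sdiff K₁ L
    have hK₁'card : K₁'.card = omegaOn G B := by
      rw [hK₁'def, Finset.card_union_of_disjoint hd]; omega
    have hK₁'max : IsMaxCliqueOn G B K₁' := isMaxCliqueOn_of_card hK₁'clique hK₁'card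
    have hinterEq : K₀ ∩ L = K₁' ∩ L := by
      ext x
      simp only [hK₁'def, Finset.mem_inter, Finset.mem_union, Finset.mem_sdiff]
      tauto
    obtain ⟨hcc, hccard⟩ := core K₀ K₁' hK₀ hK₁'max hinterEq hne₀
    have hKmax := hK.2 _ hcc
    have hKsmall := hβbound K hK.1 hempty
    omega
  · -- the union statement
    intro K' K'' hK' hK'' heq hne
    obtain ⟨hcl, hcard⟩ := core K' K'' hK' hK'' heq hne
    exact ⟨hcl, fun K h => by rw [hcard]; exact hub K h⟩
end

section
/- Let G be a finite simple graph containing an induced P4 with vertex set Y, and let M be an inclusion-minimal strong module of G containing Y, i.e., M is a strong module of G with Y ⊆ M and there is no strong module M' of G with Y ⊆ M' ⊊ M. Then M is a prime module: the induced subgraph G[M] is connected and the induced subgraph of the complement graph of G on M is connected. -/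
/-- `M` is a module of `G`: every vertex outside `M` is adjacent either to all
vertices of `M` or to none of them. -/
def IsModuleSet {V : Type*} (G : SimpleGraph V) (M : Set V) : Prop :=
  ∀ z ∉ M, (∀ x ∈ M, G.Adj z x) ∨ (∀ x ∈ M, ¬ G.Adj z x)

/-- `M` is a strong module of `G`: a module overlapping no other module. -/
def IsStrongModuleSet {V : Type*} (G : SimpleGraph V) (M : Set V) : Prop :=
  IsModuleSet G M ∧
    ∀ M' : Set V, IsModuleSet G M' → M ∩ M' = M ∨ M ∩ M' = M' ∨ M ∩ M' = ∅

lemma module_compl_iff {V : Type*} (G : SimpleGraph V) (M : Set V) :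
    IsModuleSet Gᶜ M ↔ IsModuleSet G M := by
  constructor <;> intro h z hz <;> rcases h z hz with h' | h'
  · right
    intro x hx hadj
    exact ((h' x hx).2) hadj
  · left
    intro x hx
    by_contra hadj
    exact h' x hx ⟨fun he => hz (he ▸ hx), hadj⟩
  · right
    intro x hx hadj
    exact hadj.2 (h' x hx)
  · left
    intro x hx
    exact ⟨fun he => hz (he ▸ hx), h' x hx⟩

lemma strong_compl {V : Type*} (G : SimpleGraph V) (M : Set V)
    (h : IsStrongModuleSet G M) : IsStrongModuleSet Gᶜ M := by
  refine ⟨(module_compl_iff G M).mpr h.1, fun N hN => h.2 N ((module_compl_iff G N).mp hN)⟩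

lemma key_connected {V : Type*} (G : SimpleGraph V) (a b c d : V)
    (hab : G.Adj a b) (hbc : G.Adj b c) (hcd : G.Adj c d)
    (M : Set V) (hstrong : IsStrongModuleSet G M)
    (hsub : ({a, b, c, d} : Set V) ⊆ M)
    (hmin : ¬ ∃ M' : Set V, IsStrongModuleSet G M' ∧
        ({a, b, c, d} : Set V) ⊆ M' ∧ M' ⊂ M) :
    (G.induce M).Connected := by
  have haM : a ∈ M := hsub (by simp)
  set C : Set V := {v | ∃ h : v ∈ M, (G.induce M).Reachable ⟨a, haM⟩ ⟨v, h⟩} with hCdef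
  have hCM : C ⊆ M := fun v hv => hv.1
  have haC : a ∈ C := ⟨haM, SimpleGraph.Reachable.refl _⟩
  have hclose : ∀ u ∈ C, ∀ v ∈ M, G.Adj u v → v ∈ C := by
    rintro u ⟨huM, hr⟩ v hvM huv
    refine ⟨hvM, hr.trans (SimpleGraph.Adj.reachable ?_)⟩
    exact huv
  have hbC : b ∈ C := hclose a haC b (hsub (by simp)) hab
  have hcC : c ∈ C := hclose b hbC c (hsub (by simp)) hbc
  have hdC : d ∈ C := hclose c hcC d (hsub (by simp)) hcd
  -- C is a module
  have hmodC : IsModuleSet G C := by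
    intro z hz
    by_cases hzM : z ∈ M
    · right
      intro x hx hzx
      exact hz (hclose x hx z hzM hzx.symm)
    · rcases hstrong.1 z hzM with h | h
      · left; exact fun x hx => h x (hCM hx)
      · right; exact fun x hx => h x (hCM hx)
  -- crossing lemma
  have hcross : ∀ (N : Set V) (p q : M), (G.induce M).Walk p q →
      (p : V) ∈ C → (p : V) ∉ N → (q : V) ∈ N →
      ∃ u w : V, u ∈ C ∧ w ∈ M ∧ u ∉ N ∧ w ∈ N ∧ G.Adj u w := by
    intro N p q w
    induction w with
    | nil => intro _ hpN hqN; exact absurd hqN hpN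
    | @cons p p' q hadj tail ih =>
      intro hpC hpN hqN
      by_cases h' : (p' : V) ∈ N
      · exact ⟨p, p', hpC, p'.2, hpN, h', hadj⟩
      · have hp'C : (p' : V) ∈ C := hclose p hpC p' p'.2 hadj
        exact ih hp'C h' hqN
  -- C is strong
  have hstrongC : IsStrongModuleSet G C := by
    refine ⟨hmodC, fun N hN => ?_⟩
    rcases hstrong.2 N hN with h | h | h
    · left
      have hMN : M ⊆ N := by
        intro x hx
        have : x ∈ M ∩ N := h.symm ▸ hx
        exact this.2
      exact Set.inter_eq_left.mpr (fun x hx => hMN (hCM hx))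
    · -- M ∩ N = N, i.e. N ⊆ M
      have hNM : N ⊆ M := by
        intro x hx
        have : x ∈ M ∩ N := h.symm ▸ hx
        exact this.1
      by_cases hCN0 : C ∩ N = ∅
      · right; right; exact hCN0
      by_cases hCNN : C ∩ N = N
      · right; left; exact hCNN
      -- show C ⊆ N
      left
      obtain ⟨x, hxC, hxN⟩ : ∃ x, x ∈ C ∧ x ∈ N := by
        rcases Set.nonempty_iff_ne_empty.mpr hCN0 with ⟨x, hx⟩
        exact ⟨x, hx.1, hx.2⟩
      obtain ⟨y, hyN, hyC⟩ : ∃ y, y ∈ N ∧ y ∉ C := by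
        by_contra hcon
        push_neg at hcon
        exact hCNN (Set.ext fun v => ⟨fun hv => hv.2, fun hv => ⟨hcon v hv, hv⟩⟩)
      refine Set.inter_eq_left.mpr (fun z hzC => ?_)
      by_contra hzN
      -- walk from z to x inside M
      obtain ⟨hzM, hrz⟩ := id hzC
      obtain ⟨hxM, hrx⟩ := id hxC
      have hreach : (G.induce M).Reachable ⟨z, hzM⟩ ⟨x, hxM⟩ := hrz.symm.trans hrx
      obtain ⟨w⟩ := hreach
      obtain ⟨u, t, huC, htM, huN, htN, hut⟩ :=
        hcross N ⟨z, hzM⟩ ⟨x, hxM⟩ w hzC hzN hxN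
      rcases hN u huN with hall | hnone
      · have : G.Adj u y := hall y hyN
        exact hyC (hclose u huC y (hNM hyN) this)
      · exact hnone t htN hut
    · right; right
      have : C ∩ N ⊆ M ∩ N := Set.inter_subset_inter_left N hCM
      rw [h] at this
      exact Set.subset_empty_iff.mp this
  -- minimality forces C = M
  have hCeqM : C = M := by
    by_contra hne
    exact hmin ⟨C, hstrongC, by
      intro v hv
      rcases hv with rfl | rfl | rfl | rfl
      exacts [haC, hbC, hcC, hdC], Set.ssubset_iff_subset_ne.mpr ⟨hCM, hne⟩⟩
  -- conclude connectivity
  rw [SimpleGraph.connected_iff]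
  constructor
  · intro u v
    have hu : (u : V) ∈ C := by rw [hCeqM]; exact u.2
    have hv : (v : V) ∈ C := by rw [hCeqM]; exact v.2
    obtain ⟨hu1, hru⟩ := hu
    obtain ⟨hv1, hrv⟩ := hv
    have hru' : (G.induce M).Reachable ⟨a, haM⟩ u := hru
    have hrv' : (G.induce M).Reachable ⟨a, haM⟩ v := hrv
    exact hru'.symm.trans hrv'
  · exact ⟨⟨a, haM⟩⟩

/-- An inclusion-minimal strong module containing the vertex set of an induced
`P₄` is a prime module: both `G[M]` and its complement graph on `M` are
connected. -/
theorem stmt12 {V : Type*} [Fintype V] (G : SimpleGraph V)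
    (a b c d : V)
    (hac' : a ≠ c) (had' : a ≠ d) (hbd' : b ≠ d)
    (hab : G.Adj a b) (hbc : G.Adj b c) (hcd : G.Adj c d)
    (hac : ¬ G.Adj a c) (had : ¬ G.Adj a d) (hbd : ¬ G.Adj b d)
    (M : Set V)
    (hstrong : IsStrongModuleSet G M)
    (hsub : ({a, b, c, d} : Set V) ⊆ M)
    (hmin : ¬ ∃ M' : Set V, IsStrongModuleSet G M' ∧
        ({a, b, c, d} : Set V) ⊆ M' ∧ M' ⊂ M) :
    (G.induce M).Connected ∧ ((Gᶜ).induce M).Connected := by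
  constructor
  · exact key_connected G a b c d hab hbc hcd M hstrong hsub hmin
  · -- in Gᶜ, b - d - a - c is a path
    have e1 : Gᶜ.Adj b d := ⟨hbd', hbd⟩
    have e2 : Gᶜ.Adj d a := ⟨had'.symm, fun h => had h.symm⟩
    have e3 : Gᶜ.Adj a c := ⟨hac', hac⟩
    have hsub' : ({b, d, a, c} : Set V) ⊆ M := by
      intro v hv
      rcases hv with rfl | rfl | rfl | rfl
      · exact hsub (by simp)
      · exact hsub (by simp)
      · exact hsub (by simp)
      · exact hsub (by simp)
    have hmin' : ¬ ∃ M' : Set V, IsStrongModuleSet Gᶜ M' ∧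
        ({b, d, a, c} : Set V) ⊆ M' ∧ M' ⊂ M := by
      rintro ⟨M', hS, hs, hss⟩
      refine hmin ⟨M', ?_, ?_, hss⟩
      · have := strong_compl Gᶜ M' hS
        rwa [compl_compl] at this
      · intro v hv
        rcases hv with rfl | rfl | rfl | rfl
        · exact hs (by simp)
        · exact hs (by simp)
        · exact hs (by simp)
        · exact hs (by simp)
    exact key_connected Gᶜ b d a c e1 e2 e3 M (strong_compl G M hstrong) hsub' hmin'
end
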